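/- (Decomposability of the nuclear norm over orthogonal subspaces.) Let U ⊆ ℝ^p be a subspace, and let A, B be real symmetric p×p matrices such that the column space of A is contained in U and the column space of B is contained in U^⊥. Then the nuclear norm is additive: ‖A + B‖_* = ‖A‖_* + ‖B‖_*, where ‖·‖_* denotes the nuclear norm, i.e., the sum of singular values (equivalently, for a symmetric matrix, the sum of the absolute values of its eigenvalues). -/

import Mathlib

open Matrix

/-- The (unordered) singular values of a square real matrix: the square roots of the
eigenvalues of `Aᵀ A`. -/
noncomputable def sval {m : Type*} [Fintype m] [DecidableEq m] (A : Matrix m m ℝ) : m → ℝ :=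
  fun i => Real.sqrt ((show (Aᵀ * A).IsHermitian by
    simpa [Matrix.conjTranspose_eq_transpose_of_trivial] using
      Matrix.isHermitian_conjTranspose_mul_self A).eigenvalues i)

/-- Nuclear norm: the sum of the singular values. -/
noncomputable def nuclearNorm {m : Type*} [Fintype m] [DecidableEq m] (A : Matrix m m ℝ) : ℝ :=
  ∑ i, sval A i

open scoped MatrixOrder ComplexOrder

/-!
Writing `|M| = √(Mᴴ M)`, the nuclear norm is `tr |M|`. If `A` and `B` have mutually
orthogonal column spaces and are symmetric, then `Aᴴ B = 0` and `A Bᴴ = 0`, so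
`(A + B)ᴴ (A + B) = Aᴴ A + Bᴴ B` with `Aᴴ A · Bᴴ B = 0`. For positive semidefinite `P`, `Q`
with `P Q = 0` the square roots are orthogonal as well, hence `√(P + Q) = √P + √Q`, and taking
traces gives additivity.
-/

namespace Matrix

variable {m n 𝕜 : Type*} [Fintype m] [Fintype n] [DecidableEq n] [RCLike 𝕜]

lemma conjTranspose_mul_eq_zero_of_range_le_orthogonal [DecidableEq m] {A B : Matrix m n 𝕜}
    {U : Submodule 𝕜 (EuclideanSpace 𝕜 m)} (hA : LinearMap.range A.toEuclideanLin ≤ U)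
    (hB : LinearMap.range B.toEuclideanLin ≤ Uᗮ) : Aᴴ * B = 0 := by
  apply toEuclideanLin.injective
  ext x : 1
  refine ext_inner_left 𝕜 fun y => ?_
  rw [toEuclideanLin_eq_toLin_orthonormal, toLin_mul _ (EuclideanSpace.basisFun m 𝕜).toBasis,
    ← toEuclideanLin_eq_toLin_orthonormal, ← toEuclideanLin_eq_toLin_orthonormal,
    LinearMap.comp_apply, toEuclideanLin_conjTranspose_eq_adjoint, LinearMap.adjoint_inner_right,
    map_zero, LinearMap.zero_apply, inner_zero_right]
  exact Submodule.inner_right_of_mem_orthogonal (hA ⟨y, rfl⟩) (hB ⟨x, rfl⟩)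

lemma IsHermitian.trace_cfc {A : Matrix n n 𝕜} (hA : A.IsHermitian) (f : ℝ → ℝ) :
    (cfc f A).trace = ∑ i, (f (hA.eigenvalues i) : 𝕜) := by
  rw [hA.cfc_eq, IsHermitian.cfc, Unitary.conjStarAlgAut_apply, trace_mul_cycle,
    Unitary.coe_star_mul_self, one_mul, trace_diagonal]
  rfl

lemma PosSemidef.trace_sqrt {A : Matrix n n 𝕜} (hA : A.PosSemidef) :
    (CFC.sqrt A).trace = ∑ i, (√(hA.1.eigenvalues i) : 𝕜) := by
  rw [CFC.sqrt_eq_real_sqrt A hA.nonneg, cfcₙ_eq_cfc, hA.1.trace_cfc]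

/-- `P = √P ᴴ √P` and `Q = √Q ᴴ √Q`, and a factor `Xᴴ X` can be cancelled from a vanishing
product. -/
lemma PosSemidef.sqrt_mul_sqrt_eq_zero {P Q : Matrix n n 𝕜} (hP : P.PosSemidef)
    (hQ : Q.PosSemidef) (hPQ : P * Q = 0) : CFC.sqrt P * CFC.sqrt Q = 0 := by
  have hSP : (CFC.sqrt P)ᴴ * CFC.sqrt P = P := by
    rw [(CFC.sqrt_nonneg P).posSemidef.1, CFC.sqrt_mul_sqrt_self P hP.nonneg]
  have hSQ : (CFC.sqrt Q)ᴴ * CFC.sqrt Q = Q := by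
    rw [(CFC.sqrt_nonneg Q).posSemidef.1, CFC.sqrt_mul_sqrt_self Q hQ.nonneg]
  have hsqrtP_mul : CFC.sqrt P * Q = 0 := by
    rwa [← conjTranspose_mul_self_mul_eq_zero, hSP]
  rwa [← hSQ, mul_conjTranspose_mul_self_eq_zero, (CFC.sqrt_nonneg Q).posSemidef.1]
    at hsqrtP_mul

lemma PosSemidef.sqrt_add_of_mul_eq_zero {P Q : Matrix n n 𝕜} (hP : P.PosSemidef)
    (hQ : Q.PosSemidef) (hPQ : P * Q = 0) :
    CFC.sqrt (P + Q) = CFC.sqrt P + CFC.sqrt Q := by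
  have hPQ' := hP.sqrt_mul_sqrt_eq_zero hQ hPQ
  have hQP' : CFC.sqrt Q * CFC.sqrt P = 0 := by
    rw [← (CFC.sqrt_nonneg P).posSemidef.1, ← (CFC.sqrt_nonneg Q).posSemidef.1,
      ← conjTranspose_mul, hPQ', conjTranspose_zero]
  refine CFC.sqrt_unique ?_ (add_nonneg (CFC.sqrt_nonneg P) (CFC.sqrt_nonneg Q))
  rw [add_mul, mul_add, mul_add, hPQ', hQP', CFC.sqrt_mul_sqrt_self P hP.nonneg,
    CFC.sqrt_mul_sqrt_self Q hQ.nonneg, add_zero, zero_add]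

end Matrix

section NuclearNorm

variable {n : Type*} [Fintype n] [DecidableEq n]

lemma nuclearNorm_eq_trace_sqrt (A : Matrix n n ℝ) :
    nuclearNorm A = (CFC.sqrt (Aᴴ * A)).trace := by
  rw [(posSemidef_conjTranspose_mul_self A).trace_sqrt]
  rfl

lemma nuclearNorm_add_of_conjTranspose_mul_eq_zero {A B : Matrix n n ℝ} (hAB : Aᴴ * B = 0)
    (hAB' : A * Bᴴ = 0) : nuclearNorm (A + B) = nuclearNorm A + nuclearNorm B := by
  have hBA : Bᴴ * A = 0 := by
    rw [← conjTranspose_conjTranspose A, ← conjTranspose_mul, hAB, conjTranspose_zero]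
  have hsq : (A + B)ᴴ * (A + B) = Aᴴ * A + Bᴴ * B := by
    rw [conjTranspose_add, add_mul, mul_add, mul_add, hAB, hBA, add_zero, zero_add]
  have horth : Aᴴ * A * (Bᴴ * B) = 0 := by
    rw [Matrix.mul_assoc, ← Matrix.mul_assoc A, hAB', Matrix.zero_mul, Matrix.mul_zero]
  rw [nuclearNorm_eq_trace_sqrt, nuclearNorm_eq_trace_sqrt, nuclearNorm_eq_trace_sqrt, hsq,
    (posSemidef_conjTranspose_mul_self A).sqrt_add_of_mul_eq_zero
      (posSemidef_conjTranspose_mul_self B) horth, trace_add]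

end NuclearNorm

/-- **decomposability of the nuclear norm over orthogonal subspaces.**
If `A`, `B` are real symmetric `p × p` matrices whose column spaces are contained in a
subspace `U` of `ℝ^p` and in `U^⊥`, respectively, then `‖A + B‖_* = ‖A‖_* + ‖B‖_*`. -/
theorem stmt_17 (p : ℕ) (U : Submodule ℝ (EuclideanSpace ℝ (Fin p)))
    (A B : Matrix (Fin p) (Fin p) ℝ) (hA : A.IsSymm) (hB : B.IsSymm)
    (hAU : LinearMap.range (Matrix.toEuclideanLin A) ≤ U)
    (hBU : LinearMap.range (Matrix.toEuclideanLin B) ≤ Uᗮ) :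
    nuclearNorm (A + B) = nuclearNorm A + nuclearNorm B := by
  have hAB : Aᴴ * B = 0 := conjTranspose_mul_eq_zero_of_range_le_orthogonal hAU hBU
  refine nuclearNorm_add_of_conjTranspose_mul_eq_zero hAB ?_
  rwa [conjTranspose_eq_transpose_of_trivial, hA.eq, ← hB.eq,
    ← conjTranspose_eq_transpose_of_trivial] at hAB
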